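/- Let n ≥ 1, N = {0,1,...,n}, and let b_{ij} = b_{ji} ≥ 0 be nonnegative weights on unordered pairs of distinct elements of N, with associated cut function β(S) = Σ_{i∈S, j∈N∖S} b_{ij}. Then the base polytope P(β) = {x ∈ ℝ^N : Σ_{i∈S} x_i ≤ β(S) for all S ⊆ N, and Σ_{i∈N} x_i = 0} equals the zonotope Σ_{0 ≤ i < j ≤ n} z_{ij}, the Minkowski sum over all pairs i < j of the segments z_{ij} = {λ b_{ij}(e_i − e_j) : −1 ≤ λ ≤ 1}. -/
import Mathlib


open Finset Pointwise

/-- The `i`-th standard basis vector of `ℝ^N`. -/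
noncomputable def std {m : ℕ} (i : Fin m) : Fin m → ℝ := fun k => if k = i then 1 else 0

/-- The 0/1 indicator vector of a subset `S ⊆ N`. -/
noncomputable def indic {m : ℕ} (S : Finset (Fin m)) : Fin m → ℝ := fun k => if k ∈ S then 1 else 0

/-- The standard inner product on `ℝ^N`. -/
noncomputable def ip {m : ℕ} (a b : Fin m → ℝ) : ℝ := ∑ k, a k * b k

/-- The cut set function of symmetric edge weights `b`: `β(S) = Σ_{i∈S, j∉S} b i j`. -/
noncomputable def cutFun {m : ℕ} (b : Fin m → Fin m → ℝ) (S : Finset (Fin m)) : ℝ :=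
  ∑ i ∈ S, ∑ j ∈ Sᶜ, b i j

/-- The base polytope of a set function `β`. -/
def basePoly {m : ℕ} (β : Finset (Fin m) → ℝ) : Set (Fin m → ℝ) :=
  {x | (∀ S : Finset (Fin m), ∑ i ∈ S, x i ≤ β S) ∧ ∑ i, x i = 0}

/- ### Auxiliary lemmas -/

lemma sum_std {m : ℕ} (S : Finset (Fin m)) (i : Fin m) :
    ∑ u ∈ S, std i u = if i ∈ S then 1 else 0 := by
  simp [std, Finset.sum_ite_eq' S i]

lemma indicator_sum {m : ℕ} (S : Finset (Fin m)) (f : Fin m → ℝ) :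
    ∑ u ∈ S, f u = ∑ u, (if u ∈ S then (1:ℝ) else 0) * f u := by
  have h : ∀ u, (if u ∈ S then (1:ℝ) else 0) * f u = if u ∈ S then f u else 0 := by
    intro u; split <;> simp
  simp only [h]
  rw [Finset.sum_ite_mem, Finset.univ_inter]

lemma sum_sum_ite_mem {m : ℕ} (s t : Finset (Fin m)) (i j : Fin m) (c : ℝ) :
    ∑ u ∈ s, ∑ v ∈ t, (if u = i ∧ v = j then c else 0) = if i ∈ s ∧ j ∈ t then c else 0 := by
  have hinner : ∀ u, ∑ v ∈ t, (if u = i ∧ v = j then c else 0)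
      = if u = i ∧ j ∈ t then c else 0 := by
    intro u
    by_cases h : u = i
    · subst h
      simp only [true_and]
      rw [Finset.sum_ite_eq' t j (fun _ => c)]
    · simp [h]
  simp only [hinner]
  by_cases hj : j ∈ t
  · simp only [hj, and_true]
    rw [Finset.sum_ite_eq' s i (fun _ => c)]
  · simp [hj]

lemma cut_eq {m : ℕ} (b : Fin m → Fin m → ℝ) (S : Finset (Fin m)) :
    cutFun b S
      = ∑ u, ∑ v, b u v * ((if u ∈ S then (1:ℝ) else 0) * (if v ∈ S then (0:ℝ) else 1)) := by
  rw [cutFun, indicator_sum]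
  apply Finset.sum_congr rfl
  intro u _
  rw [indicator_sum Sᶜ (fun v => b u v), Finset.mul_sum]
  apply Finset.sum_congr rfl
  intro v _
  by_cases hv : v ∈ S <;> simp [hv]

lemma cut_submodular {m : ℕ} (b : Fin m → Fin m → ℝ) (hnn : ∀ i j, 0 ≤ b i j)
    (i j : Fin m) (hij : i ≠ j) (S T : Finset (Fin m))
    (hiS : i ∈ S) (hjS : j ∉ S) (hjT : j ∈ T) (hiT : i ∉ T) :
    cutFun b (S ∩ T) + cutFun b (S ∪ T) + (b i j + b j i) ≤ cutFun b S + cutFun b T := by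
  have hpair : b i j + b j i = ∑ u, ∑ v, b u v *
      ((if u = i ∧ v = j then (1:ℝ) else 0) + (if u = j ∧ v = i then (1:ℝ) else 0)) := by
    have h : ∀ u v : Fin m, b u v *
        ((if u = i ∧ v = j then (1:ℝ) else 0) + (if u = j ∧ v = i then (1:ℝ) else 0))
        = (if u = i ∧ v = j then b i j else 0) + (if u = j ∧ v = i then b j i else 0) := by
      intro u v
      by_cases h1 : u = i ∧ v = j
      · obtain ⟨rfl, rfl⟩ := h1
        have h2 : ¬(u = v ∧ v = u) := fun h => hij (h.1.symm ▸ rfl)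
        simp [h2]
      · by_cases h2 : u = j ∧ v = i
        · obtain ⟨rfl, rfl⟩ := h2
          simp [h1]
        · simp [h1, h2]
    simp only [h, Finset.sum_add_distrib, sum_sum_ite_mem]
    simp
  rw [cut_eq b (S ∩ T), cut_eq b (S ∪ T), cut_eq b S, cut_eq b T, hpair,
    ← Finset.sum_add_distrib, ← Finset.sum_add_distrib, ← Finset.sum_add_distrib]
  apply Finset.sum_le_sum
  intro u _
  rw [← Finset.sum_add_distrib, ← Finset.sum_add_distrib, ← Finset.sum_add_distrib]
  apply Finset.sum_le_sum
  intro v _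
  have key : ((if u ∈ S ∩ T then (1:ℝ) else 0) * (if v ∈ S ∩ T then (0:ℝ) else 1))
      + ((if u ∈ S ∪ T then (1:ℝ) else 0) * (if v ∈ S ∪ T then (0:ℝ) else 1))
      + ((if u = i ∧ v = j then (1:ℝ) else 0) + (if u = j ∧ v = i then (1:ℝ) else 0))
      ≤ ((if u ∈ S then (1:ℝ) else 0) * (if v ∈ S then (0:ℝ) else 1))
      + ((if u ∈ T then (1:ℝ) else 0) * (if v ∈ T then (0:ℝ) else 1)) := by
    by_cases h1 : u = i ∧ v = j
    · obtain ⟨rfl, rfl⟩ := h1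
      have h2 : ¬(u = v ∧ v = u) := fun h => hij (h.1.symm ▸ rfl)
      simp [Finset.mem_inter, Finset.mem_union, hiS, hiT, hjS, hjT, h2]
    · by_cases h2 : u = j ∧ v = i
      · obtain ⟨rfl, rfl⟩ := h2
        simp [Finset.mem_inter, Finset.mem_union, hiS, hiT, hjS, hjT, h1]
      · by_cases huS : u ∈ S <;> by_cases huT : u ∈ T <;> by_cases hvS : v ∈ S <;>
          by_cases hvT : v ∈ T <;>
          simp [Finset.mem_inter, Finset.mem_union, huS, huT, hvS, hvT, h1, h2]
  calc b u v * ((if u ∈ S ∩ T then (1:ℝ) else 0) * (if v ∈ S ∩ T then (0:ℝ) else 1))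
      + b u v * ((if u ∈ S ∪ T then (1:ℝ) else 0) * (if v ∈ S ∪ T then (0:ℝ) else 1))
      + b u v * ((if u = i ∧ v = j then (1:ℝ) else 0) + (if u = j ∧ v = i then (1:ℝ) else 0))
      = b u v * (((if u ∈ S ∩ T then (1:ℝ) else 0) * (if v ∈ S ∩ T then (0:ℝ) else 1))
        + ((if u ∈ S ∪ T then (1:ℝ) else 0) * (if v ∈ S ∪ T then (0:ℝ) else 1))
        + ((if u = i ∧ v = j then (1:ℝ) else 0) + (if u = j ∧ v = i then (1:ℝ) else 0))) := by
        ring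
    _ ≤ b u v * (((if u ∈ S then (1:ℝ) else 0) * (if v ∈ S then (0:ℝ) else 1))
        + ((if u ∈ T then (1:ℝ) else 0) * (if v ∈ T then (0:ℝ) else 1))) :=
        mul_le_mul_of_nonneg_left key (hnn u v)
    _ = b u v * ((if u ∈ S then (1:ℝ) else 0) * (if v ∈ S then (0:ℝ) else 1))
      + b u v * ((if u ∈ T then (1:ℝ) else 0) * (if v ∈ T then (0:ℝ) else 1)) := by ring

/-- `b` with the (symmetric) edge `{i,j}` removed. -/
noncomputable def bmod {m : ℕ} (b : Fin m → Fin m → ℝ) (i j : Fin m) : Fin m → Fin m → ℝ :=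
  fun u v => if (u = i ∧ v = j) ∨ (u = j ∧ v = i) then 0 else b u v

lemma cut_split {m : ℕ} (b : Fin m → Fin m → ℝ) (hsym : ∀ i j, b i j = b j i)
    (i j : Fin m) (hij : i ≠ j) (S : Finset (Fin m)) :
    cutFun b S = cutFun (bmod b i j) S
      + ((if i ∈ S ∧ j ∉ S then b i j else 0) + (if j ∈ S ∧ i ∉ S then b i j else 0)) := by
  have hdecomp : ∀ u v, b u v = bmod b i j u v
      + ((if u = i ∧ v = j then b i j else 0) + (if u = j ∧ v = i then b i j else 0)) := by
    intro u v
    by_cases h1 : u = i ∧ v = j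
    · obtain ⟨rfl, rfl⟩ := h1
      have h2 : ¬(u = v ∧ v = u) := fun h => hij (h.1.symm ▸ rfl)
      simp [bmod, h2]
    · by_cases h2 : u = j ∧ v = i
      · obtain ⟨rfl, rfl⟩ := h2
        simp [bmod, h1, hsym u v]
      · simp [bmod, h1, h2]
  calc cutFun b S = ∑ u ∈ S, ∑ v ∈ Sᶜ, (bmod b i j u v
      + ((if u = i ∧ v = j then b i j else 0) + (if u = j ∧ v = i then b i j else 0))) := by
        rw [cutFun]
        exact Finset.sum_congr rfl fun u _ => Finset.sum_congr rfl fun v _ => hdecomp u v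
    _ = cutFun (bmod b i j) S
        + ((if i ∈ S ∧ j ∈ Sᶜ then b i j else 0) + (if j ∈ S ∧ i ∈ Sᶜ then b i j else 0)) := by
        simp only [Finset.sum_add_distrib, sum_sum_ite_mem]
        rfl
    _ = _ := by simp [Finset.mem_compl]

/-- The segment `{λ b_{ij}(e_i − e_j) : −1 ≤ λ ≤ 1}`. -/
noncomputable def seg {m : ℕ} (b : Fin m → Fin m → ℝ) (p : Fin m × Fin m) :
    Set (Fin m → ℝ) :=
  {x : Fin m → ℝ | ∃ l : ℝ, -1 ≤ l ∧ l ≤ 1 ∧ x = (l * b p.1 p.2) • (std p.1 - std p.2)}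

lemma seg_zero {m : ℕ} (b : Fin m → Fin m → ℝ) (p : Fin m × Fin m)
    (hb : b p.1 p.2 = 0) : seg b p = 0 := by
  ext x
  simp only [seg, Set.mem_setOf_eq, hb, mul_zero, zero_smul]
  constructor
  · rintro ⟨l, -, -, rfl⟩; rfl
  · rintro rfl; exact ⟨0, by norm_num⟩

lemma sum_smul_seg {m : ℕ} (c : ℝ) (i j : Fin m) (S : Finset (Fin m)) :
    ∑ u ∈ S, (c • (std i - std j)) u
      = c * ((if i ∈ S then (1:ℝ) else 0) - (if j ∈ S then 1 else 0)) := by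
  simp only [Pi.smul_apply, Pi.sub_apply, smul_eq_mul]
  rw [← Finset.mul_sum, Finset.sum_sub_distrib, sum_std, sum_std]
lemma aux_main {m : ℕ} (k : ℕ) (b : Fin m → Fin m → ℝ)
    (hsym : ∀ i j, b i j = b j i) (hnn : ∀ i j, 0 ≤ b i j)
    (hk : ((Finset.univ.filter (fun p : Fin m × Fin m => p.1 < p.2)).filter
      (fun p => b p.1 p.2 ≠ 0)).card = k) :
    basePoly (cutFun b)
      = ∑ p ∈ Finset.univ.filter (fun p : Fin m × Fin m => p.1 < p.2), seg b p := by
  induction k generalizing b with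
  | zero =>
    have hemp : (Finset.univ.filter (fun p : Fin m × Fin m => p.1 < p.2)).filter
        (fun p => b p.1 p.2 ≠ 0) = ∅ := Finset.card_eq_zero.mp hk
    have hb0 : ∀ u v : Fin m, u ≠ v → b u v = 0 := by
      intro u v huv
      rcases lt_or_gt_of_ne huv with h | h
      · by_contra hne
        have : (u, v) ∈ (Finset.univ.filter (fun p : Fin m × Fin m => p.1 < p.2)).filter
            (fun p => b p.1 p.2 ≠ 0) := by
          simp [Finset.mem_filter, h, hne]
        rw [hemp] at this
        exact absurd this (Finset.notMem_empty _)
      · by_contra hne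
        have hne' : b v u ≠ 0 := by rw [← hsym]; exact hne
        have : (v, u) ∈ (Finset.univ.filter (fun p : Fin m × Fin m => p.1 < p.2)).filter
            (fun p => b p.1 p.2 ≠ 0) := by
          simp [Finset.mem_filter, h, hne']
        rw [hemp] at this
        exact absurd this (Finset.notMem_empty _)
    have hcut0 : ∀ S : Finset (Fin m), cutFun b S = 0 := by
      intro S
      rw [cutFun]
      apply Finset.sum_eq_zero
      intro u hu
      apply Finset.sum_eq_zero
      intro v hv
      exact hb0 u v (by rintro rfl; exact (Finset.mem_compl.mp hv) hu)
    have hbp : basePoly (cutFun b) = {0} := by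
      ext x
      simp only [basePoly, Set.mem_setOf_eq, Set.mem_singleton_iff]
      constructor
      · rintro ⟨h1, h2⟩
        funext u
        have ha : x u ≤ 0 := by
          have := h1 {u}
          simpa [hcut0] using this
        have hc : -(x u) ≤ 0 := by
          have hcc := h1 ({u} : Finset (Fin m))ᶜ
          rw [hcut0] at hcc
          have hadd := Finset.sum_add_sum_compl ({u} : Finset (Fin m)) x
          rw [h2, Finset.sum_singleton] at hadd
          linarith
        have : x u = 0 := le_antisymm ha (by linarith)
        simpa using this
      · rintro rfl
        refine ⟨fun S => by simp [hcut0], by simp⟩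
    rw [hbp, Finset.sum_eq_zero (fun p hp => seg_zero b p
      (hb0 p.1 p.2 (ne_of_lt (Finset.mem_filter.mp hp).2)))]
    rfl
  | succ k ih =>
    set P := Finset.univ.filter (fun p : Fin m × Fin m => p.1 < p.2) with hP
    have hne : (P.filter (fun p => b p.1 p.2 ≠ 0)).Nonempty := by
      rw [← Finset.card_pos, hk]; omega
    obtain ⟨p₀, hp₀⟩ := hne
    obtain ⟨hp₀P, hbne⟩ := Finset.mem_filter.mp hp₀
    set i := p₀.1
    set j := p₀.2
    have hlt : i < j := (Finset.mem_filter.mp hp₀P).2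
    have hijne : i ≠ j := ne_of_lt hlt
    have hbpos : 0 < b i j := (hnn i j).lt_of_ne (Ne.symm hbne)
    have hp₀eq : p₀ = (i, j) := rfl
    -- properties of bmod
    have hbmod_eq : ∀ q : Fin m × Fin m, q.1 < q.2 → q ≠ (i, j) →
        bmod b i j q.1 q.2 = b q.1 q.2 := by
      intro q hq hneq
      have h1 : ¬(q.1 = i ∧ q.2 = j) := fun h => hneq (Prod.ext h.1 h.2)
      have h2 : ¬(q.1 = j ∧ q.2 = i) := by
        rintro ⟨ha, hb'⟩
        rw [ha, hb'] at hq
        exact absurd (hq.trans hlt) (lt_irrefl j)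
      simp [bmod, h1, h2]
    have hbmod_ij : bmod b i j i j = 0 := by simp [bmod]
    have hsym' : ∀ u v, bmod b i j u v = bmod b i j v u := by
      intro u v
      simp only [bmod]
      have hiff : ((v = i ∧ u = j) ∨ (v = j ∧ u = i)) ↔ ((u = i ∧ v = j) ∨ (u = j ∧ v = i)) := by
        tauto
      by_cases h : (u = i ∧ v = j) ∨ (u = j ∧ v = i)
      · rw [if_pos h, if_pos (hiff.mpr h)]
      · rw [if_neg h, if_neg (fun hc => h (hiff.mp hc))]
        exact hsym u v
    have hnn' : ∀ u v, 0 ≤ bmod b i j u v := by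
      intro u v
      simp only [bmod]
      split
      · exact le_refl 0
      · exact hnn u v
    have hsupp' : P.filter (fun p => bmod b i j p.1 p.2 ≠ 0)
        = (P.filter (fun p => b p.1 p.2 ≠ 0)).erase (i, j) := by
      ext q
      simp only [Finset.mem_erase, Finset.mem_filter]
      constructor
      · rintro ⟨hq, hneq⟩
        by_cases hqij : q = (i, j)
        · exfalso
          apply hneq
          rw [hqij]
          exact hbmod_ij
        · have hql : q.1 < q.2 := by
            have := Finset.mem_filter.mp hq
            exact this.2
          rw [hbmod_eq q hql hqij] at hneq
          exact ⟨hqij, hq, hneq⟩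
      · rintro ⟨hqij, hq, hneq⟩
        have hql : q.1 < q.2 := (Finset.mem_filter.mp hq).2
        rw [← hbmod_eq q hql hqij] at hneq
        exact ⟨hq, hneq⟩
    have hcard' : (P.filter (fun p => bmod b i j p.1 p.2 ≠ 0)).card = k := by
      rw [hsupp', Finset.card_erase_of_mem hp₀, hk]
      omega
    have IH := ih (bmod b i j) hsym' hnn' hcard'
    have hPij : (i, j) ∈ P := hp₀P
    -- zonotope splits off the (i,j) segment
    have hzono : ∑ p ∈ P, seg b p = seg b (i, j) + ∑ p ∈ P, seg (bmod b i j) p := by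
      rw [← Finset.add_sum_erase P (seg b) hPij]
      rw [← Finset.add_sum_erase P (seg (bmod b i j)) hPij]
      rw [seg_zero (bmod b i j) (i, j) hbmod_ij, zero_add]
      congr 1
      apply Finset.sum_congr rfl
      intro q hq
      rw [Finset.mem_erase] at hq
      have hql : q.1 < q.2 := (Finset.mem_filter.mp hq.2).2
      simp only [seg, hbmod_eq q hql hq.1]
    rw [hzono, ← IH]
    -- main equality: basePoly (cutFun b) = seg b (i,j) + basePoly (cutFun (bmod b i j))
    ext x
    constructor
    · rintro ⟨h1, h2⟩
      set Q := Finset.univ.filter (fun S : Finset (Fin m) => i ∈ S ∧ j ∉ S) with hQdef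
      have hQne : Q.Nonempty := by
        refine ⟨{i}, Finset.mem_filter.mpr ⟨Finset.mem_univ _, Finset.mem_singleton_self i, ?_⟩⟩
        intro h
        exact hijne (Finset.mem_singleton.mp h).symm
      set A := Q.sup' hQne (fun S => (∑ u ∈ S, x u - cutFun b S) / b i j + 1) with hAdef
      set lam := max A (-1) with hlamdef
      have hA1 : A ≤ 1 := by
        apply Finset.sup'_le
        intro S _
        have hS := h1 S
        have : (∑ u ∈ S, x u - cutFun b S) / b i j ≤ 0 :=
          div_nonpos_of_nonpos_of_nonneg (by linarith) hbpos.le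
        linarith
      have hlam1 : lam ≤ 1 := max_le hA1 (by norm_num)
      have hlam2 : -1 ≤ lam := le_max_right _ _
      set x' := x - (lam * b i j) • (std i - std j) with hx'def
      have hsumS : ∀ S : Finset (Fin m), ∑ u ∈ S, x' u = ∑ u ∈ S, x u
          - lam * b i j * ((if i ∈ S then (1:ℝ) else 0) - (if j ∈ S then 1 else 0)) := by
        intro S
        rw [hx'def]
        simp only [Pi.sub_apply]
        rw [Finset.sum_sub_distrib, sum_smul_seg]
      have hx'mem : x' ∈ basePoly (cutFun (bmod b i j)) := by
        constructor
        · intro S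
          rw [hsumS S]
          have hsplit := cut_split b hsym i j hijne S
          by_cases hiS : i ∈ S <;> by_cases hjS : j ∈ S
          · have : cutFun (bmod b i j) S = cutFun b S := by
              rw [hsplit]; simp [hiS, hjS]
            rw [this]
            simp only [if_pos hiS, if_pos hjS]
            have := h1 S
            linarith
          · -- i ∈ S, j ∉ S
            have hcs : cutFun (bmod b i j) S = cutFun b S - b i j := by
              rw [hsplit]; simp [hiS, hjS]
            have hSQ : S ∈ Q := Finset.mem_filter.mpr ⟨Finset.mem_univ _, hiS, hjS⟩
            have hle0 : (∑ u ∈ S, x u - cutFun b S) / b i j + 1 ≤ A := by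
              rw [hAdef]
              exact Finset.le_sup' (fun S : Finset (Fin m) => (∑ u ∈ S, x u - cutFun b S) / b i j + 1) hSQ
            have hle : (∑ u ∈ S, x u - cutFun b S) / b i j + 1 ≤ lam :=
              le_trans hle0 (le_max_left _ _)
            have hmul := (div_le_iff₀ hbpos).mp
              (by linarith : (∑ u ∈ S, x u - cutFun b S) / b i j ≤ lam - 1)
            rw [hcs]
            simp only [if_pos hiS, if_neg hjS]
            linarith
          · -- j ∈ S, i ∉ S
            have hcs : cutFun (bmod b i j) S = cutFun b S - b i j := by
              rw [hsplit]; simp [hiS, hjS]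
            have hAle : A ≤ (cutFun b S - ∑ u ∈ S, x u) / b i j - 1 := by
              apply Finset.sup'_le
              intro T hT
              obtain ⟨-, hiT, hjT⟩ := Finset.mem_filter.mp hT
              have hsub := cut_submodular b hnn i j hijne T S hiT hjT hjS hiS
              have hI := h1 (T ∩ S)
              have hU := h1 (T ∪ S)
              have hsum2 : ∑ u ∈ T ∪ S, x u + ∑ u ∈ T ∩ S, x u
                  = ∑ u ∈ T, x u + ∑ u ∈ S, x u := Finset.sum_union_inter
              have hb2 : b j i = b i j := hsym j i
              have hkey : ∑ u ∈ T, x u - cutFun b T + 2 * b i j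
                  ≤ cutFun b S - ∑ u ∈ S, x u := by linarith
              have hdiv : (∑ u ∈ T, x u - cutFun b T + 2 * b i j) / b i j
                  ≤ (cutFun b S - ∑ u ∈ S, x u) / b i j :=
                div_le_div_of_nonneg_right hkey hbpos.le
              have hexp : (∑ u ∈ T, x u - cutFun b T + 2 * b i j) / b i j
                  = (∑ u ∈ T, x u - cutFun b T) / b i j + 2 := by
                field_simp
              linarith
            have hlamle : lam ≤ (cutFun b S - ∑ u ∈ S, x u) / b i j - 1 := by
              apply max_le hAle
              have h0 : 0 ≤ cutFun b S - ∑ u ∈ S, x u := by linarith [h1 S]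
              have := div_nonneg h0 hbpos.le
              linarith
            have hmul := (le_div_iff₀ hbpos).mp
              (by linarith : lam + 1 ≤ (cutFun b S - ∑ u ∈ S, x u) / b i j)
            rw [hcs]
            simp only [if_neg hiS, if_pos hjS]
            linarith
          · have : cutFun (bmod b i j) S = cutFun b S := by
              rw [hsplit]; simp [hiS, hjS]
            rw [this]
            simp only [if_neg hiS, if_neg hjS]
            have := h1 S
            linarith
        · have := hsumS Finset.univ
          simp only [Finset.mem_univ, if_pos] at this
          rw [this, h2]
          ring
      refine Set.mem_add.mpr ⟨(lam * b i j) • (std i - std j), ⟨lam, hlam2, hlam1, rfl⟩,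
        x', hx'mem, ?_⟩
      rw [hx'def]
      abel
    · intro hx
      obtain ⟨z, hz, y, hy, hsum⟩ := Set.mem_add.mp hx
      obtain ⟨l, hl1, hl2, rfl⟩ := hz
      obtain ⟨g1, g2⟩ := hy
      have hxS : ∀ S : Finset (Fin m), ∑ u ∈ S, x u
          = l * b i j * ((if i ∈ S then (1:ℝ) else 0) - (if j ∈ S then 1 else 0))
            + ∑ u ∈ S, y u := by
        intro S
        rw [← hsum]
        simp only [Pi.add_apply]
        rw [Finset.sum_add_distrib, sum_smul_seg]
      constructor
      · intro S
        rw [hxS S]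
        have hsplit := cut_split b hsym i j hijne S
        by_cases hiS : i ∈ S <;> by_cases hjS : j ∈ S
        · have hcs : cutFun (bmod b i j) S = cutFun b S := by
            rw [hsplit]; simp [hiS, hjS]
          have := g1 S
          simp only [if_pos hiS, if_pos hjS]
          rw [← hcs]
          linarith
        · have hcs : cutFun (bmod b i j) S = cutFun b S - b i j := by
            rw [hsplit]; simp [hiS, hjS]
          have hg := g1 S
          rw [hcs] at hg
          have hlb : l * b i j ≤ 1 * b i j := mul_le_mul_of_nonneg_right hl2 (hnn i j)
          simp only [if_pos hiS, if_neg hjS]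
          linarith
        · have hcs : cutFun (bmod b i j) S = cutFun b S - b i j := by
            rw [hsplit]; simp [hiS, hjS]
          have hg := g1 S
          rw [hcs] at hg
          have hlb : (-1) * b i j ≤ l * b i j := mul_le_mul_of_nonneg_right hl1 (hnn i j)
          simp only [if_neg hiS, if_pos hjS]
          linarith
        · have hcs : cutFun (bmod b i j) S = cutFun b S := by
            rw [hsplit]; simp [hiS, hjS]
          have := g1 S
          simp only [if_neg hiS, if_neg hjS]
          rw [← hcs]
          linarith
      · have := hxS Finset.univ
        simp only [Finset.mem_univ, if_pos] at this
        rw [this, g2]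
        ring

/-- The base polytope of the cut function of nonnegative symmetric weights
equals the zonotope `Σ_{i<j} {λ b_{ij}(e_i − e_j) : −1 ≤ λ ≤ 1}` (Minkowski sum of
segments). -/
theorem basePoly_eq_zonotope (n : ℕ) (hn : 1 ≤ n) (b : Fin (n + 1) → Fin (n + 1) → ℝ)
    (hsym : ∀ i j, b i j = b j i) (hnn : ∀ i j, 0 ≤ b i j) :
    basePoly (cutFun b)
      = ∑ p ∈ Finset.univ.filter (fun p : Fin (n + 1) × Fin (n + 1) => p.1 < p.2),
          {x : Fin (n + 1) → ℝ |
            ∃ l : ℝ, -1 ≤ l ∧ l ≤ 1 ∧ x = (l * b p.1 p.2) • (std p.1 - std p.2)} :=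
  aux_main _ b hsym hnn rfl
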